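/- arXiv:1905.06427 — 7 statements merged into one kernel-verified Lean document; each statement's English description precedes it below -/
import Mathlib

section
/- Let m11, m12, m21, u2 be real numbers with m12 ≠ 0 and m11² + m12·m21 < 0, and set ρ = √(−(m11² + m12·m21)) and e = −m12·u2/ρ. Define the affine vector field F(x,y) = (m11·x + m12·y, m21·x − m11·y + u2), the vector field G(x,y) = (−y, x + e), and the linear map φ(x,y) = (ρ·x, −m11·x − m12·y). Then ρ > 0, φ is an invertible linear map of ℝ² that maps the line {(x,y) : x = 0} onto itself and the half-plane {(x,y) : x ≤ 0} onto itself, and for every (x,y) ∈ ℝ² one has φ(F(x,y)) = ρ·G(φ(x,y)); that is, φ conjugates the system (ẋ,ẏ) = F(x,y) to the canonical system (ẋ,ẏ) = G(x,y) up to the constant time rescaling t ↦ ρ·t. -/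
/-!
The map `φ` is lower triangular with diagonal `(ρ, -m12)`, hence invertible, and it scales the
first coordinate by `ρ > 0`, so it preserves the sign of `x`. The conjugacy identity is a
polynomial identity once `ρ² = -(m11² + m12 m21)` is substituted.
-/

open Real

section PlaneMaps

variable {K : Type*} [Field K] {f : K × K → K × K} {a c d : K}

theorem bijective_of_lowerTriangular (ha : a ≠ 0) (hd : d ≠ 0)
    (hf₁ : ∀ p, (f p).1 = a * p.1) (hf₂ : ∀ p, (f p).2 = c * p.1 + d * p.2) :
    Function.Bijective f := by
  refine Function.bijective_iff_has_inverse.mpr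
    ⟨fun q => (q.1 / a, (q.2 - c * (q.1 / a)) / d), fun p => ?_, fun q => ?_⟩
  · ext
    · simp only [hf₁]; field_simp
    · simp only [hf₁, hf₂]; field_simp; ring
  · ext
    · simp only [hf₁]; field_simp
    · simp only [hf₂]; field_simp; ring

theorem image_setOf_fst_of_fst_eq_mul (hf : Function.Surjective f)
    (hf₁ : ∀ p, (f p).1 = a * p.1) {P : K → Prop} (hP : ∀ x, P (a * x) ↔ P x) :
    f '' {p | P p.1} = {p | P p.1} := by
  have hpre : f ⁻¹' {p | P p.1} = {p | P p.1} :=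
    Set.ext fun p => by simp only [Set.mem_preimage, Set.mem_ofPred_eq, hf₁, hP]
  rw [← hpre, Set.image_preimage_eq _ hf, hpre]

end PlaneMaps

theorem canonical_form_left_zone
    (m11 m12 m21 u2 : ℝ) (hm12 : m12 ≠ 0) (hcen : m11 ^ 2 + m12 * m21 < 0)
    (ρ : ℝ) (hρ : ρ = Real.sqrt (-(m11 ^ 2 + m12 * m21)))
    (e : ℝ) (he : e = -m12 * u2 / ρ)
    (F : ℝ × ℝ → ℝ × ℝ)
    (hF : F = fun p => (m11 * p.1 + m12 * p.2, m21 * p.1 - m11 * p.2 + u2))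
    (G : ℝ × ℝ → ℝ × ℝ)
    (hG : G = fun p => (-p.2, p.1 + e))
    (φ : ℝ × ℝ →ₗ[ℝ] ℝ × ℝ)
    (hφ : ∀ p : ℝ × ℝ, φ p = (ρ * p.1, -m11 * p.1 - m12 * p.2)) :
    0 < ρ ∧ Function.Bijective φ ∧
    φ '' {p : ℝ × ℝ | p.1 = 0} = {p : ℝ × ℝ | p.1 = 0} ∧
    φ '' {p : ℝ × ℝ | p.1 ≤ 0} = {p : ℝ × ℝ | p.1 ≤ 0} ∧
    ∀ p : ℝ × ℝ, φ (F p) = ρ • G (φ p) := by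
  have hρpos : 0 < ρ := hρ ▸ Real.sqrt_pos.mpr (neg_pos.mpr hcen)
  have hρsq : ρ ^ 2 = -(m11 ^ 2 + m12 * m21) := hρ ▸ Real.sq_sqrt (neg_nonneg.mpr hcen.le)
  have hφ₁ : ∀ p, (φ p).1 = ρ * p.1 := fun p => by rw [hφ]
  have hφ₂ : ∀ p, (φ p).2 = -m11 * p.1 + -m12 * p.2 := fun p => by rw [hφ]; ring
  have hbij : Function.Bijective φ :=
    bijective_of_lowerTriangular hρpos.ne' (neg_ne_zero.mpr hm12) hφ₁ hφ₂
  refine ⟨hρpos, hbij,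
    image_setOf_fst_of_fst_eq_mul hbij.2 hφ₁ (P := (· = 0)) fun _ =>
      mul_eq_zero_iff_left hρpos.ne',
    image_setOf_fst_of_fst_eq_mul hbij.2 hφ₁ (P := (· ≤ 0)) fun x => by
      simpa only [mul_zero] using mul_le_mul_iff_of_pos_left (b := x) (c := 0) hρpos,
    fun p => ?_⟩
  subst hF hG he
  ext
  · simp only [hφ₁, hφ₂, Prod.smul_fst, smul_eq_mul]
    ring
  · simp only [hφ₁, hφ₂, Prod.smul_snd, smul_eq_mul]
    field_simp
    linear_combination -p.1 * hρsq
end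

section
/- Let m11⁻, m12⁻, m21⁻ be real numbers with m12⁻ ≠ 0 and (m11⁻)² + m12⁻·m21⁻ < 0, and set ρ = √(−((m11⁻)² + m12⁻·m21⁻)). Let m11⁺, m12⁺, m21⁺, u2⁺ be real numbers, and define a = (1/ρ)(m11⁺ − m11⁻·m12⁺/m12⁻), b = −m12⁺/m12⁻, c = (1/ρ²)((m11⁻)²·m12⁺/m12⁻ − 2·m11⁻·m11⁺ − m12⁻·m21⁺), d = −m12⁻·u2⁺/ρ. Define F⁺(x,y) = (m11⁺·x + m12⁺·y, m21⁺·x − m11⁺·y + u2⁺), G⁺(x,y) = (a·x + b·y, c·x − a·y + d), and the linear map φ(x,y) = (ρ·x, −m11⁻·x − m12⁻·y). Then for every (x,y) ∈ ℝ² one has φ(F⁺(x,y)) = ρ·G⁺(φ(x,y)), and moreover a² + b·c = ((m11⁺)² + m12⁺·m21⁺)/ρ²; in particular a² + b·c < 0 if and only if (m11⁺)² + m12⁺·m21⁺ < 0. -/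
/-!
The chart `φ` is invertible as soon as `ρ ≠ 0` and `m12⁻ ≠ 0`, and the coefficients `a, b, c, d`
are exactly those of `ρ⁻¹ · φ ∘ F⁺ ∘ φ⁻¹`, so the conjugation identity is a polynomial identity
once the denominators are cleared. The quantity `a² + b c` is minus the determinant of the linear
part of `G⁺`; conjugating by `φ` preserves the determinant and scaling by `ρ⁻¹` divides it by `ρ²`.
-/

noncomputable section

namespace CanonicalForm

variable (m11m m12m m11p m12p m21p u2p ρ : ℝ)

def coeffA : ℝ := (1 / ρ) * (m11p - m11m * m12p / m12m)

def coeffB : ℝ := -m12p / m12m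

def coeffC : ℝ := (1 / ρ ^ 2) * (m11m ^ 2 * m12p / m12m - 2 * m11m * m11p - m12m * m21p)

def coeffD : ℝ := -m12m * u2p / ρ

def chart (p : ℝ × ℝ) : ℝ × ℝ := (ρ * p.1, -m11m * p.1 - m12m * p.2)

def rightField (p : ℝ × ℝ) : ℝ × ℝ := (m11p * p.1 + m12p * p.2, m21p * p.1 - m11p * p.2 + u2p)

def canonicalField (a b c d : ℝ) (p : ℝ × ℝ) : ℝ × ℝ := (a * p.1 + b * p.2, c * p.1 - a * p.2 + d)

variable {m11m m12m m11p m12p m21p u2p ρ}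

theorem chart_rightField (hm : m12m ≠ 0) (hρ : ρ ≠ 0) (p : ℝ × ℝ) :
    chart m11m m12m ρ (rightField m11p m12p m21p u2p p) =
      ρ • canonicalField (coeffA m11m m12m m11p m12p ρ) (coeffB m12m m12p)
        (coeffC m11m m12m m11p m12p m21p ρ) (coeffD m12m u2p ρ) (chart m11m m12m ρ p) := by
  simp only [chart, rightField, canonicalField, coeffA, coeffB, coeffC, coeffD, Prod.smul_mk,
    smul_eq_mul, Prod.mk.injEq]
  constructor <;> field_simp <;> ring

theorem coeffA_sq_add_coeffB_mul_coeffC (hm : m12m ≠ 0) (hρ : ρ ≠ 0) :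
    coeffA m11m m12m m11p m12p ρ ^ 2 + coeffB m12m m12p * coeffC m11m m12m m11p m12p m21p ρ =
      (m11p ^ 2 + m12p * m21p) / ρ ^ 2 := by
  simp only [coeffA, coeffB, coeffC]
  field_simp
  ring

end CanonicalForm

end

open CanonicalForm in
theorem canonical_form_right_zone
    (m11m m12m m21m : ℝ) (hm12m : m12m ≠ 0) (hcen : m11m ^ 2 + m12m * m21m < 0)
    (ρ : ℝ) (hρ : ρ = Real.sqrt (-(m11m ^ 2 + m12m * m21m)))
    (m11p m12p m21p u2p : ℝ)
    (a b c d : ℝ)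
    (ha : a = (1 / ρ) * (m11p - m11m * m12p / m12m))
    (hb : b = -m12p / m12m)
    (hc : c = (1 / ρ ^ 2) * (m11m ^ 2 * m12p / m12m - 2 * m11m * m11p - m12m * m21p))
    (hd : d = -m12m * u2p / ρ)
    (F : ℝ × ℝ → ℝ × ℝ)
    (hF : F = fun p => (m11p * p.1 + m12p * p.2, m21p * p.1 - m11p * p.2 + u2p))
    (G : ℝ × ℝ → ℝ × ℝ)
    (hG : G = fun p => (a * p.1 + b * p.2, c * p.1 - a * p.2 + d))
    (φ : ℝ × ℝ →ₗ[ℝ] ℝ × ℝ)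
    (hφ : ∀ p : ℝ × ℝ, φ p = (ρ * p.1, -m11m * p.1 - m12m * p.2)) :
    (∀ p : ℝ × ℝ, φ (F p) = ρ • G (φ p)) ∧
    a ^ 2 + b * c = (m11p ^ 2 + m12p * m21p) / ρ ^ 2 ∧
    (a ^ 2 + b * c < 0 ↔ m11p ^ 2 + m12p * m21p < 0) := by
  have hρpos : 0 < ρ := hρ ▸ Real.sqrt_pos.2 (neg_pos.2 hcen)
  have hinv : a ^ 2 + b * c = (m11p ^ 2 + m12p * m21p) / ρ ^ 2 :=
    ha ▸ hb ▸ hc ▸ coeffA_sq_add_coeffB_mul_coeffC hm12m hρpos.ne'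
  refine ⟨fun p => ?_, hinv, ?_⟩
  · subst ha hb hc hd hF hG
    rw [hφ, hφ]
    exact chart_rightField hm12m hρpos.ne' p
  · rw [hinv, div_lt_iff₀ (by positivity), zero_mul]
end

section
/- Let e > 0 and y0 > 0, and let x, y : ℝ → ℝ be differentiable functions satisfying x'(t) = −y(t) and y'(t) = x(t) + e for all t, with x(0) = 0 and y(0) = y0. Set t_l0 = 2π − arccos(2e²/(e² + y0²) − 1). Then π < t_l0 < 2π, x(t_l0) = 0, y(t_l0) = −y0, and x(t) < 0 for every t with 0 < t < t_l0; that is, t_l0 is the first return time of the orbit through (0, y0) to the switching line x = 0, and the return point is (0, −y0). -/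
/-! The left system is a rotation about `(-e, 0)`, so the solution through `(0, y0)` is
`x t = R cos (t + φ) - e`, `y t = R sin (t + φ)`, where `(R, φ)` are the polar coordinates of
`(e, y0)`; uniqueness holds because the squared distance between two solutions is conserved.
The orbit is in `x < 0` exactly while `φ < t + φ < 2π - φ`, so it returns at `t = 2π - 2φ`,
and `2φ = arccos (2e²/(e² + y0²) - 1)` by the double-angle formula. -/

open Real

lemma sq_add_sq_eq_of_hasDerivAt_rotation {p q : ℝ → ℝ}
    (hp : ∀ t, HasDerivAt p (-q t) t) (hq : ∀ t, HasDerivAt q (p t) t) (s t : ℝ) :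
    p t ^ 2 + q t ^ 2 = p s ^ 2 + q s ^ 2 := by
  have hderiv : ∀ t, HasDerivAt (fun t => p t ^ 2 + q t ^ 2) 0 t := fun t =>
    (((hp t).fun_pow 2).add ((hq t).fun_pow 2)).congr_deriv (by ring)
  exact is_const_of_deriv_eq_zero (fun t => (hderiv t).differentiableAt)
    (fun t => (hderiv t).deriv) t s

lemma eq_of_hasDerivAt_linear_center {c t₀ : ℝ} {x y X Y : ℝ → ℝ}
    (hx : ∀ t, HasDerivAt x (-y t) t) (hy : ∀ t, HasDerivAt y (x t + c) t)
    (hX : ∀ t, HasDerivAt X (-Y t) t) (hY : ∀ t, HasDerivAt Y (X t + c) t)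
    (hx₀ : x t₀ = X t₀) (hy₀ : y t₀ = Y t₀) : x = X ∧ y = Y := by
  have hdist (t : ℝ) : (x t - X t) ^ 2 + (y t - Y t) ^ 2 = 0 := by
    rw [sq_add_sq_eq_of_hasDerivAt_rotation (p := fun t => x t - X t) (q := fun t => y t - Y t)
      (fun t => ((hx t).sub (hX t)).congr_deriv (by ring))
      (fun t => ((hy t).sub (hY t)).congr_deriv (by ring)) t₀ t, hx₀, hy₀]
    ring
  constructor <;> funext t <;> nlinarith [hdist t, sq_nonneg (x t - X t), sq_nonneg (y t - Y t)]

lemma hasDerivAt_linear_center_solution (c r φ : ℝ) :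
    (∀ t, HasDerivAt (fun t => r * cos (t + φ) - c) (-(r * sin (t + φ))) t) ∧
      ∀ t, HasDerivAt (fun t => r * sin (t + φ)) ((r * cos (t + φ) - c) + c) t := by
  refine ⟨fun t => ?_, fun t => ?_⟩
  · exact ((((hasDerivAt_id' t).add_const φ).cos.const_mul r).sub_const c).congr_deriv (by ring)
  · exact (((hasDerivAt_id' t).add_const φ).sin.const_mul r).congr_deriv (by ring)

lemma exists_polar_of_pos {a b : ℝ} (ha : 0 < a) (hb : 0 < b) :
    ∃ r φ : ℝ, 0 < r ∧ r * cos φ = a ∧ r * sin φ = b ∧ 0 < φ ∧ φ < π / 2 := by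
  set z : ℂ := ⟨a, b⟩
  have hz : z ≠ 0 := fun h => ha.ne' (congrArg Complex.re h)
  refine ⟨‖z‖, z.arg, norm_pos_iff.mpr hz, Complex.norm_mul_cos_arg z,
    Complex.norm_mul_sin_arg z, ?_, Complex.arg_lt_pi_div_two_iff.mpr (Or.inl ha)⟩
  refine (Complex.arg_nonneg_iff.mpr hb.le).lt_of_ne fun h => ?_
  exact hb.ne' (Complex.arg_eq_zero_iff.mp h.symm).2

lemma arccos_two_mul_sq_div_sub_one {r φ a b : ℝ} (hr : r ≠ 0) (ha : r * cos φ = a)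
    (hb : r * sin φ = b) (hφ₀ : 0 ≤ φ) (hφ : φ ≤ π / 2) :
    arccos (2 * a ^ 2 / (a ^ 2 + b ^ 2) - 1) = 2 * φ := by
  have hnorm : a ^ 2 + b ^ 2 = r ^ 2 := by
    rw [← ha, ← hb, mul_pow, mul_pow, ← mul_add, cos_sq_add_sin_sq, mul_one]
  have hcos : 2 * a ^ 2 / (a ^ 2 + b ^ 2) - 1 = cos (2 * φ) := by
    rw [hnorm, ← ha, cos_two_mul]
    field_simp
  rw [hcos, arccos_cos (by linarith) (by linarith)]

lemma cos_lt_cos_of_lt_of_lt_two_pi_sub {φ s : ℝ} (hφ₀ : 0 ≤ φ) (hφs : φ < s)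
    (hs : s < 2 * π - φ) : cos s < cos φ := by
  rcases le_or_gt s π with hsπ | hπs
  · exact cos_lt_cos_of_nonneg_of_le_pi hφ₀ hsπ hφs
  · rw [← cos_two_pi_sub s]
    exact cos_lt_cos_of_nonneg_of_le_pi hφ₀ (by linarith) (by linarith)

theorem left_half_return_time
    (e y0 : ℝ) (he : 0 < e) (hy0 : 0 < y0)
    (x y : ℝ → ℝ)
    (hx : ∀ t : ℝ, HasDerivAt x (-(y t)) t)
    (hy : ∀ t : ℝ, HasDerivAt y (x t + e) t)
    (hx0 : x 0 = 0) (hy0' : y 0 = y0)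
    (tl0 : ℝ)
    (htl0 : tl0 = 2 * π - Real.arccos (2 * e ^ 2 / (e ^ 2 + y0 ^ 2) - 1)) :
    π < tl0 ∧ tl0 < 2 * π ∧ x tl0 = 0 ∧ y tl0 = -y0 ∧
    ∀ t : ℝ, 0 < t → t < tl0 → x t < 0 := by
  obtain ⟨R, φ, hR, hRe, hRy0, hφ₀, hφ⟩ := exists_polar_of_pos he hy0
  rw [arccos_two_mul_sq_div_sub_one hR.ne' hRe hRy0 hφ₀.le hφ.le] at htl0
  obtain ⟨hX, hY⟩ := hasDerivAt_linear_center_solution e R φ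
  obtain ⟨rfl, rfl⟩ := eq_of_hasDerivAt_linear_center hx hy hX hY
    (by rw [hx0, zero_add, hRe, sub_self]) (by rw [hy0', zero_add, hRy0])
  have hreturn : tl0 + φ = 2 * π - φ := by rw [htl0]; ring
  refine ⟨by linarith, by linarith, ?_, ?_, fun t ht₀ ht => ?_⟩
  · simp only [hreturn, cos_two_pi_sub, hRe, sub_self]
  · simp only [hreturn, sin_two_pi_sub, mul_neg, hRy0]
  · have hcos := cos_lt_cos_of_lt_of_lt_two_pi_sub hφ₀.le (by linarith : φ < t + φ) (by linarith)
    show R * cos (t + φ) - e < 0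
    linarith [mul_lt_mul_of_pos_left hcos hR]
end

section
/- Let β ∈ ℝ and define f0(s) = s, f1(s) = 1 + β²·s², f2(s) = (s² + 1)·arccos(2/(s² + 1) − 1). Then for every s > 0 the third-order Wronskian determinant W(f0, f1, f2)(s) = det [[f0(s), f1(s), f2(s)], [f0'(s), f1'(s), f2'(s)], [f0''(s), f1''(s), f2''(s)]] equals 2(β² − 1)·arccos(2/(s² + 1) − 1) − 4(β² + 1)·s/(s² + 1). -/
/-!
On `s > 0` the substitution `s = tan (θ / 2)` gives `arccos (2 / (s ^ 2 + 1) - 1) = 2 * arctan s`,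
so `f2` agrees on the open set `Ioi 0` with the elementary function `2 (s ^ 2 + 1) arctan s`, whose
first two derivatives are `4 s arctan s + 2` and `4 arctan s + 4 s / (1 + s ^ 2)`. Expanding the
determinant with these closed forms leaves an algebraic identity in `s`, `β` and `arctan s`.
-/

open Real Set

lemma arccos_two_div_sq_add_one_sub_one {s : ℝ} (hs : 0 ≤ s) :
    arccos (2 / (s ^ 2 + 1) - 1) = 2 * arctan s := by
  have hcos : cos (2 * arctan s) = 2 / (s ^ 2 + 1) - 1 := by
    rw [cos_two_mul, cos_arctan, div_pow, one_pow, sq_sqrt (by positivity)]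
    field_simp
    ring
  rw [← hcos, arccos_cos]
  · linarith [arctan_nonneg.mpr hs]
  · linarith [arctan_lt_pi_div_two s, pi_pos]

lemma eqOn_sq_add_one_mul_arccos_two_mul_arctan :
    EqOn (fun s : ℝ => (s ^ 2 + 1) * arccos (2 / (s ^ 2 + 1) - 1))
      (fun s => 2 * ((s ^ 2 + 1) * arctan s)) (Ioi 0) := fun s hs => by
  simp only [arccos_two_div_sq_add_one_sub_one (le_of_lt hs)]
  ring

lemma deriv_two_mul_sq_add_one_mul_arctan :
    deriv (fun s : ℝ => 2 * ((s ^ 2 + 1) * arctan s)) = fun s => 4 * s * arctan s + 2 := by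
  funext s
  have h : HasDerivAt (fun s : ℝ => 2 * ((s ^ 2 + 1) * arctan s))
      (2 * ((2 * s) * arctan s + (s ^ 2 + 1) * (1 / (1 + s ^ 2)))) s :=
    ((((hasDerivAt_pow 2 s).add_const 1).mul (hasDerivAt_arctan s)).const_mul 2).congr_deriv
      (by push_cast; ring)
  rw [h.deriv]
  field_simp
  ring

lemma deriv_deriv_two_mul_sq_add_one_mul_arctan (s : ℝ) :
    deriv (deriv (fun s : ℝ => 2 * ((s ^ 2 + 1) * arctan s))) s =
      4 * arctan s + 4 * s / (1 + s ^ 2) := by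
  rw [deriv_two_mul_sq_add_one_mul_arctan]
  have h : HasDerivAt (fun s : ℝ => 4 * s * arctan s + 2)
      (4 * arctan s + 4 * s * (1 / (1 + s ^ 2))) s := by
    have := (((hasDerivAt_id s).const_mul 4).mul (hasDerivAt_arctan s)).add_const 2
    simpa using this
  rw [h.deriv]
  ring

theorem third_wronskian_formula
    (β : ℝ)
    (f0 f1 f2 : ℝ → ℝ)
    (hf0 : f0 = fun s => s)
    (hf1 : f1 = fun s => 1 + β ^ 2 * s ^ 2)
    (hf2 : f2 = fun s => (s ^ 2 + 1) * Real.arccos (2 / (s ^ 2 + 1) - 1)) :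
    ∀ s : ℝ, 0 < s →
      Matrix.det !![f0 s, f1 s, f2 s;
                    deriv f0 s, deriv f1 s, deriv f2 s;
                    deriv (deriv f0) s, deriv (deriv f1) s, deriv (deriv f2) s] =
        2 * (β ^ 2 - 1) * Real.arccos (2 / (s ^ 2 + 1) - 1)
          - 4 * (β ^ 2 + 1) * s / (s ^ 2 + 1) := by
  intro s hs
  have hd1 := eqOn_sq_add_one_mul_arccos_two_mul_arctan.deriv isOpen_Ioi
  have hf0d : deriv f0 = fun _ => 1 := by simp [hf0]
  have hf1d : deriv f1 = fun s => β ^ 2 * (2 * s) := by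
    funext s
    simp [hf1]
  have hf2d : deriv f2 s = 4 * s * arctan s + 2 := by
    rw [hf2, hd1 hs, deriv_two_mul_sq_add_one_mul_arctan]
  have hf2dd : deriv (deriv f2) s = 4 * arctan s + 4 * s / (1 + s ^ 2) := by
    rw [hf2, hd1.deriv isOpen_Ioi hs, deriv_deriv_two_mul_sq_add_one_mul_arctan]
  simp only [Matrix.det_fin_three, Matrix.of_apply, Matrix.cons_val', Matrix.cons_val_zero,
    Matrix.cons_val_one, Matrix.cons_val_two, Matrix.head_cons, Matrix.tail_cons,
    Matrix.empty_val', Matrix.cons_val_fin_one, Matrix.head_fin_const, hf0d, hf1d, hf2d, hf2dd,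
    deriv_const, deriv_const_mul_field', deriv_const_mul_id']
  simp only [hf0, hf1, hf2, arccos_two_div_sq_add_one_sub_one hs.le]
  field_simp
  ring
end

section
/- Let b < 0, d > 0, e > 0, ξ > 0 and v1⁻, v1⁺, b11⁻, b22⁻, b11⁺, b22⁺ be real numbers, and let M1 be the first-order Melnikov function defined in the context. Then lim_{y0 → 0⁺} y0·M1(y0) = −π·e²·(b11⁻ + b22⁻). In particular, if b11⁻ + b22⁻ ≠ 0, then for all sufficiently small y0 > 0 the sign of M1(y0) equals −sign(b11⁻ + b22⁻). -/
/-!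
The bracket in `M1 y0 = (1 / (2 y0)) · (…)` is continuous at `y0 = 0`: each term
`(c² + y²) · arccos (2c² / (c² + y²) - 1)` tends to `0`, because the arccos tends to `arccos 1 = 0`
when `c ≠ 0` and the prefactor tends to `0` when `c = 0`. So the bracket tends to `-2π e² (b11⁻ + b22⁻)`,
`y0 · M1 y0` tends to half of it, and for small `y0 > 0` the sign of `M1 y0` is that of this limit.
-/

open Real Filter Set Topology

theorem Real.sign_mul_of_pos {c : ℝ} (hc : 0 < c) (x : ℝ) : sign (c * x) = sign x := by
  rcases lt_trichotomy x 0 with hx | rfl | hx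
  · rw [sign_of_neg hx, sign_of_neg (mul_neg_of_pos_of_neg hc hx)]
  · rw [mul_zero]
  · rw [sign_of_pos hx, sign_of_pos (mul_pos hc hx)]

theorem Filter.Tendsto.eventually_sign_eq {α : Type*} {l : Filter α} {f : α → ℝ} {L : ℝ}
    (hf : Tendsto f l (𝓝 L)) (hL : L ≠ 0) : ∀ᶠ x in l, sign (f x) = sign L := by
  rcases hL.lt_or_gt with hL | hL
  · filter_upwards [hf.eventually (eventually_lt_nhds hL)] with x hx
    rw [sign_of_neg hx, sign_of_neg hL]
  · filter_upwards [hf.eventually (eventually_gt_nhds hL)] with x hx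
    rw [sign_of_pos hx, sign_of_pos hL]

theorem tendsto_sq_add_sq_mul_arccos (c : ℝ) :
    Tendsto (fun y => (c ^ 2 + y ^ 2) * arccos (2 * c ^ 2 / (c ^ 2 + y ^ 2) - 1)) (𝓝 0) (𝓝 0) := by
  rcases eq_or_ne c 0 with rfl | hc
  · simpa using ((continuous_pow 2).mul_const π).tendsto' (0 : ℝ) 0 (by simp)
  · have hpos : ∀ y : ℝ, c ^ 2 + y ^ 2 ≠ 0 := fun y => by positivity
    have hcont : Continuous fun y : ℝ =>
        (c ^ 2 + y ^ 2) * arccos (2 * c ^ 2 / (c ^ 2 + y ^ 2) - 1) := by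
      fun_prop (disch := exact hpos _)
    simpa [hc, show (2 : ℝ) - 1 = 1 by norm_num] using hcont.tendsto 0

theorem tendsto_mul_one_div_two_mul {l : Filter ℝ} {F : ℝ → ℝ} {L : ℝ}
    (hF : Tendsto F l (𝓝 (2 * L))) (hl : ∀ᶠ y in l, y ≠ 0) :
    Tendsto (fun y => y * (1 / (2 * y) * F y)) l (𝓝 L) := by
  have : Tendsto (fun y => F y / 2) l (𝓝 L) := by simpa using hF.div_const 2
  refine this.congr' (hl.mono fun y hy => ?_)
  field_simp

theorem tendsto_melnikov_numerator (b d e ξ v1m v1p S T : ℝ) :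
    Tendsto (fun y0 => 4 * v1m * y0 - 2 * S * (π * (e ^ 2 + y0 ^ 2) + e * y0) +
        S * (e ^ 2 + y0 ^ 2) * arccos (2 * e ^ 2 / (e ^ 2 + y0 ^ 2) - 1) -
        (1 / (b * ξ ^ 3)) * (-2 * b * d * y0 * ξ * T - 4 * v1p * y0 * ξ ^ 3 +
          b * T * (d ^ 2 + y0 ^ 2 * ξ ^ 2) * arccos (2 * d ^ 2 / (d ^ 2 + y0 ^ 2 * ξ ^ 2) - 1)))
      (𝓝 0) (𝓝 (2 * -(π * e ^ 2 * S))) := by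
  have hd : Tendsto (fun y =>
      (d ^ 2 + y ^ 2 * ξ ^ 2) * arccos (2 * d ^ 2 / (d ^ 2 + y ^ 2 * ξ ^ 2) - 1)) (𝓝 0) (𝓝 0) := by
    simpa [Function.comp_def, mul_pow] using
      (tendsto_sq_add_sq_mul_arccos d).comp ((continuous_mul_const ξ).tendsto' 0 0 (zero_mul ξ))
  have hpoly₁ : Continuous fun y : ℝ => 4 * v1m * y - 2 * S * (π * (e ^ 2 + y ^ 2) + e * y) := by
    fun_prop
  have hpoly₂ : Continuous fun y : ℝ => -2 * b * d * y * ξ * T - 4 * v1p * y * ξ ^ 3 := by fun_prop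
  convert ((hpoly₁.tendsto 0).add ((tendsto_sq_add_sq_mul_arccos e).const_mul S)).sub
    (((hpoly₂.tendsto 0).add (hd.const_mul (b * T))).const_mul (1 / (b * ξ ^ 3))) using 1
  · ext y; ring
  · congr 1; ring

theorem melnikov_limit_at_zero_general
    (b d e ξ v1m v1p b11m b22m b11p b22p : ℝ)
    (he : 0 < e)
    (M1 : ℝ → ℝ)
    (hM1 : M1 = fun y0 =>
      (1 / (2 * y0)) *
        (4 * v1m * y0 -
          2 * (b11m + b22m) * (π * (e ^ 2 + y0 ^ 2) + e * y0) +
          (b11m + b22m) * (e ^ 2 + y0 ^ 2) *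
            Real.arccos (2 * e ^ 2 / (e ^ 2 + y0 ^ 2) - 1) -
          (1 / (b * ξ ^ 3)) *
            (-2 * b * d * y0 * ξ * (b11p + b22p) - 4 * v1p * y0 * ξ ^ 3 +
              b * (b11p + b22p) * (d ^ 2 + y0 ^ 2 * ξ ^ 2) *
                Real.arccos (2 * d ^ 2 / (d ^ 2 + y0 ^ 2 * ξ ^ 2) - 1)))) :
    Tendsto (fun y0 => y0 * M1 y0) (nhdsWithin 0 (Ioi 0))
      (nhds (-(π * e ^ 2 * (b11m + b22m)))) ∧
    (b11m + b22m ≠ 0 →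
      ∀ᶠ y0 in nhdsWithin 0 (Ioi 0),
        Real.sign (M1 y0) = -Real.sign (b11m + b22m)) := by
  obtain ⟨F, hF, rfl⟩ : ∃ F : ℝ → ℝ, Tendsto F (𝓝 0) (𝓝 (2 * -(π * e ^ 2 * (b11m + b22m)))) ∧
      M1 = fun y0 => 1 / (2 * y0) * F y0 :=
    ⟨_, tendsto_melnikov_numerator b d e ξ v1m v1p _ (b11p + b22p), hM1⟩
  have hlim := tendsto_mul_one_div_two_mul (hF.mono_left nhdsWithin_le_nhds)
    (eventually_mem_nhdsWithin.mono fun _ hy => (mem_Ioi.1 hy).ne')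
  refine ⟨hlim, fun hS => ?_⟩
  have hL : -(π * e ^ 2 * (b11m + b22m)) ≠ 0 := neg_ne_zero.2 (mul_ne_zero (by positivity) hS)
  filter_upwards [hlim.eventually_sign_eq hL, self_mem_nhdsWithin] with y hsign (hy : 0 < y)
  rwa [sign_mul_of_pos hy, sign_neg, sign_mul_of_pos (by positivity : 0 < π * e ^ 2)] at hsign

theorem melnikov_limit_at_zero
    (b d e ξ v1m v1p b11m b22m b11p b22p : ℝ)
    (hb : b < 0) (hd : 0 < d) (he : 0 < e) (hξ : 0 < ξ)
    (M1 : ℝ → ℝ)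
    (hM1 : M1 = fun y0 =>
      (1 / (2 * y0)) *
        (4 * v1m * y0 -
          2 * (b11m + b22m) * (π * (e ^ 2 + y0 ^ 2) + e * y0) +
          (b11m + b22m) * (e ^ 2 + y0 ^ 2) *
            Real.arccos (2 * e ^ 2 / (e ^ 2 + y0 ^ 2) - 1) -
          (1 / (b * ξ ^ 3)) *
            (-2 * b * d * y0 * ξ * (b11p + b22p) - 4 * v1p * y0 * ξ ^ 3 +
              b * (b11p + b22p) * (d ^ 2 + y0 ^ 2 * ξ ^ 2) *
                Real.arccos (2 * d ^ 2 / (d ^ 2 + y0 ^ 2 * ξ ^ 2) - 1)))) :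
    Tendsto (fun y0 => y0 * M1 y0) (nhdsWithin 0 (Ioi 0))
      (nhds (-(π * e ^ 2 * (b11m + b22m)))) ∧
    (b11m + b22m ≠ 0 →
      ∀ᶠ y0 in nhdsWithin 0 (Ioi 0),
        Real.sign (M1 y0) = -Real.sign (b11m + b22m)) :=
  melnikov_limit_at_zero_general b d e ξ v1m v1p b11m b22m b11p b22p he M1 hM1
end

section
/- For every s > 0 with s ≠ 1, the function W̃1(s) = (−2s + (s² − 1)·arccos(1 − 2/(s² + 1)))/(s² − 1) is differentiable at s and W̃1'(s) = 8s²/((s² − 1)²·(s² + 1)). In particular W̃1 is strictly increasing on (0, 1) and on (1, ∞). -/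
/-!
For `s ≥ 0` the half-angle formula `cos (π - 2 arctan s) = 1 - 2 / (s² + 1)` gives
`arccos (1 - 2 / (s² + 1)) = π - 2 arctan s`, so near any `s > 0`, `s ≠ 1`,
`W̃₁ = -2s / (s² - 1) + π - 2 arctan s`. The derivatives `2 (s² + 1) / (s² - 1)²` and
`-2 / (s² + 1)` of the two parts combine to `8 s² / ((s² - 1)² (s² + 1)) > 0`.
-/

open Real Set Topology

noncomputable def wronskianTildeOne (s : ℝ) : ℝ :=
  (-2 * s + (s ^ 2 - 1) * arccos (1 - 2 / (s ^ 2 + 1))) / (s ^ 2 - 1)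

lemma sq_sub_one_ne_zero_of_pos {s : ℝ} (hs : 0 < s) (hs1 : s ≠ 1) : s ^ 2 - 1 ≠ 0 := by
  rw [sub_ne_zero, Ne, pow_eq_one_iff_of_nonneg hs.le two_ne_zero]
  exact hs1

lemma arccos_one_sub_two_div_sq_add_one {s : ℝ} (hs : 0 ≤ s) :
    arccos (1 - 2 / (s ^ 2 + 1)) = π - 2 * arctan s := by
  have hcos : cos (π - 2 * arctan s) = 1 - 2 / (s ^ 2 + 1) := by
    rw [cos_pi_sub, cos_two_mul, cos_sq_arctan, add_comm (1 : ℝ)]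
    ring
  have h0 : 0 ≤ arctan s := arctan_nonneg.mpr hs
  have h1 : arctan s < π / 2 := arctan_lt_pi_div_two s
  rw [← hcos, arccos_cos] <;> linarith

lemma wronskianTildeOne_eq {s : ℝ} (hs : 0 < s) (hs1 : s ≠ 1) :
    wronskianTildeOne s = -2 * s / (s ^ 2 - 1) + (π - 2 * arctan s) := by
  rw [wronskianTildeOne, arccos_one_sub_two_div_sq_add_one hs.le, add_div,
    mul_div_cancel_left₀ _ (sq_sub_one_ne_zero_of_pos hs hs1)]

lemma hasDerivAt_wronskianTildeOne {s : ℝ} (hs : 0 < s) (hs1 : s ≠ 1) :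
    HasDerivAt wronskianTildeOne (8 * s ^ 2 / ((s ^ 2 - 1) ^ 2 * (s ^ 2 + 1))) s := by
  have hden := sq_sub_one_ne_zero_of_pos hs hs1
  have hrational : HasDerivAt (fun x : ℝ => -2 * x / (x ^ 2 - 1))
      ((-2 * (s ^ 2 - 1) - -2 * s * (2 * s)) / (s ^ 2 - 1) ^ 2) s := by
    refine HasDerivAt.div ?_ ?_ hden
    · exact ((hasDerivAt_id' s).const_mul (-2 : ℝ)).congr_deriv (mul_one _)
    · simpa using (hasDerivAt_pow 2 s).sub_const 1
  have hangle : HasDerivAt (fun x : ℝ => π - 2 * arctan x) (-(2 * (1 / (1 + s ^ 2)))) s :=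
    ((hasDerivAt_arctan s).const_mul 2).const_sub π
  have heq : wronskianTildeOne =ᶠ[𝓝 s] fun x => -2 * x / (x ^ 2 - 1) + (π - 2 * arctan x) := by
    filter_upwards [Ioi_mem_nhds hs, isOpen_ne.mem_nhds hs1] with x hx hx1
    exact wronskianTildeOne_eq hx hx1
  refine ((hrational.add hangle).congr_of_eventuallyEq heq).congr_deriv ?_
  field_simp
  ring

lemma strictMonoOn_of_hasDerivAt_pos {D : Set ℝ} (hD : Convex ℝ D) (hDo : IsOpen D)
    {f f' : ℝ → ℝ} (hf : ∀ x ∈ D, HasDerivAt f (f' x) x) (hf' : ∀ x ∈ D, 0 < f' x) :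
    StrictMonoOn f D := by
  refine strictMonoOn_of_hasDerivWithinAt_pos (f' := f') hD
    (fun x hx => (hf x hx).continuousAt.continuousWithinAt) ?_ ?_ <;> rw [hDo.interior_eq]
  · exact fun x hx => (hf x hx).hasDerivWithinAt
  · exact hf'

theorem wronskian_tilde_one_monotone
    (W1t : ℝ → ℝ)
    (hW1t : W1t = fun s =>
      (-2 * s + (s ^ 2 - 1) * Real.arccos (1 - 2 / (s ^ 2 + 1))) / (s ^ 2 - 1)) :
    (∀ s : ℝ, 0 < s → s ≠ 1 →
      HasDerivAt W1t (8 * s ^ 2 / ((s ^ 2 - 1) ^ 2 * (s ^ 2 + 1))) s) ∧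
    StrictMonoOn W1t (Ioo 0 1) ∧ StrictMonoOn W1t (Ioi 1) := by
  have hderiv : ∀ s : ℝ, 0 < s → s ≠ 1 →
      HasDerivAt W1t (8 * s ^ 2 / ((s ^ 2 - 1) ^ 2 * (s ^ 2 + 1))) s := by
    subst hW1t
    exact fun s => hasDerivAt_wronskianTildeOne
  have hpos : ∀ s : ℝ, 0 < s → s ≠ 1 → 0 < 8 * s ^ 2 / ((s ^ 2 - 1) ^ 2 * (s ^ 2 + 1)) :=
    fun s hs hs1 => by
      have := sq_sub_one_ne_zero_of_pos hs hs1
      positivity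
  refine ⟨hderiv, ?_, ?_⟩
  · exact strictMonoOn_of_hasDerivAt_pos (convex_Ioo 0 1) isOpen_Ioo
      (fun s hs => hderiv s hs.1 hs.2.ne) (fun s hs => hpos s hs.1 hs.2.ne)
  · exact strictMonoOn_of_hasDerivAt_pos (convex_Ioi 1) isOpen_Ioi
      (fun s hs => hderiv s (one_pos.trans hs) hs.ne')
      (fun s hs => hpos s (one_pos.trans hs) hs.ne')
end

section
/- Let k0, k1 be real numbers, not both zero. Then the function s ↦ k0·s + k1·(s² + 1)·arccos(1 − 2/(s² + 1)) has at most one zero in the interval (0, ∞). -/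
/-!
For `s > 0` the half-angle formula gives `arccos (1 - 2 / (s ^ 2 + 1)) = 2 * arctan s⁻¹`, so the
ratio `g₁ s / g₀ s` equals `2 * (s + s⁻¹) * arctan s⁻¹`. Its derivative has the sign of
`(s ^ 2 - 1) * arctan s⁻¹ - s`, which is negative because `arctan x < x` for `x > 0`. A strictly
monotone ratio `g₁ / g₀` with `g₀ ≠ 0` is exactly what makes `(g₀, g₁)` a Chebyshev system:
a zero of `k₀ g₀ + k₁ g₁` is a solution of `g₁ / g₀ = -k₀ / k₁`.
-/

open Real Set

theorem Set.encard_setOf_mul_add_mul_eq_zero_le_one {α 𝕜 : Type*} [Field 𝕜] {S : Set α}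
    {f g : α → 𝕜} (hf : ∀ x ∈ S, f x ≠ 0) (hfg : InjOn (fun x ↦ g x / f x) S) {a b : 𝕜}
    (hab : ¬(a = 0 ∧ b = 0)) : {x | x ∈ S ∧ a * f x + b * g x = 0}.encard ≤ 1 := by
  rw [encard_le_one_iff]
  rintro x y ⟨hx, hxz⟩ ⟨hy, hyz⟩
  have hb : b ≠ 0 := by
    rintro rfl
    have ha : a ≠ 0 := fun ha ↦ hab ⟨ha, rfl⟩
    simp only [zero_mul, add_zero, mul_eq_zero] at hxz
    exact hxz.elim ha (hf x hx)
  have ratio_eq : ∀ z ∈ S, a * f z + b * g z = 0 → g z / f z = -a / b := fun z hz hzz ↦ by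
    field_simp [hf z hz]
    linear_combination hzz
  exact hfg hx hy ((ratio_eq x hx hxz).trans (ratio_eq y hy hyz).symm)

namespace Real

theorem arctan_lt_self {x : ℝ} (hx : 0 < x) : arctan x < x := by
  simpa only [tan_arctan] using lt_tan (arctan_pos.2 hx) (arctan_lt_pi_div_two x)

theorem arccos_one_sub_two_div_sq_add_one {s : ℝ} (hs : 0 < s) :
    arccos (1 - 2 / (s ^ 2 + 1)) = 2 * arctan s⁻¹ := by
  have h_pos : 0 < arctan s⁻¹ := arctan_pos.2 (inv_pos.2 hs)
  have h_lt : arctan s⁻¹ < π / 2 := arctan_lt_pi_div_two _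
  have h_cos : cos (2 * arctan s⁻¹) = 1 - 2 / (s ^ 2 + 1) := by
    rw [cos_two_mul, cos_arctan, div_pow, one_pow, sq_sqrt (by positivity)]
    field_simp
    ring
  rw [← h_cos, arccos_cos (by linarith) (by linarith)]

theorem sq_sub_one_mul_arctan_inv_lt {s : ℝ} (hs : 0 < s) : (s ^ 2 - 1) * arctan s⁻¹ < s := by
  have h_pos : 0 < arctan s⁻¹ := arctan_pos.2 (inv_pos.2 hs)
  rcases le_or_gt s 1 with hs1 | hs1
  · have h_nonpos : s ^ 2 - 1 ≤ 0 := by nlinarith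
    linarith [mul_nonpos_of_nonpos_of_nonneg h_nonpos h_pos.le]
  · calc (s ^ 2 - 1) * arctan s⁻¹ < (s ^ 2 - 1) * s⁻¹ :=
          mul_lt_mul_of_pos_left (arctan_lt_self (inv_pos.2 hs)) (by nlinarith)
      _ = s - s⁻¹ := by field_simp
      _ < s := sub_lt_self s (inv_pos.2 hs)

theorem hasDerivAt_add_inv_mul_arctan_inv {s : ℝ} (hs : 0 < s) :
    HasDerivAt (fun x ↦ (x + x⁻¹) * arctan x⁻¹)
      (((s ^ 2 - 1) * arctan s⁻¹ - s) / s ^ 2) s := by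
  have h_inv : HasDerivAt (fun x : ℝ ↦ x⁻¹) (-(s ^ 2)⁻¹) s := hasDerivAt_inv hs.ne'
  refine (((hasDerivAt_id s).add h_inv).mul ((hasDerivAt_arctan s⁻¹).comp s h_inv)).congr_deriv ?_
  simp only [Pi.add_apply, id, Function.comp_apply]
  field_simp
  ring

theorem strictAntiOn_add_inv_mul_arctan_inv :
    StrictAntiOn (fun x ↦ (x + x⁻¹) * arctan x⁻¹) (Ioi 0) := by
  refine strictAntiOn_of_hasDerivWithinAt_neg (convex_Ioi 0)
    (f' := fun x ↦ ((x ^ 2 - 1) * arctan x⁻¹ - x) / x ^ 2)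
    (fun x hx ↦ (hasDerivAt_add_inv_mul_arctan_inv hx).continuousAt.continuousWithinAt)
    (fun x hx ↦ ?_) (fun x hx ↦ ?_) <;> rw [interior_Ioi] at hx
  · exact (hasDerivAt_add_inv_mul_arctan_inv hx).hasDerivWithinAt
  · exact div_neg_of_neg_of_pos (sub_neg.2 (sq_sub_one_mul_arctan_inv_lt hx)) (pow_pos hx 2)

end Real

theorem chebyshev_pair_at_most_one_zero
    (k0 k1 : ℝ) (hk : ¬(k0 = 0 ∧ k1 = 0)) :
    {s : ℝ | 0 < s ∧
      k0 * s + k1 * (s ^ 2 + 1) * Real.arccos (1 - 2 / (s ^ 2 + 1)) = 0}.encard ≤ 1 := by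
  have ratio_eq : EqOn (fun s ↦ 2 * ((s + s⁻¹) * arctan s⁻¹))
      (fun s ↦ (s ^ 2 + 1) * arccos (1 - 2 / (s ^ 2 + 1)) / s) (Ioi 0) := fun s hs ↦ by
    simp only [arccos_one_sub_two_div_sq_add_one hs]
    field_simp [(mem_Ioi.1 hs).ne']
  have ratio_injOn := ((mul_right_injective₀ two_ne_zero).comp_injOn
    strictAntiOn_add_inv_mul_arctan_inv.injOn).congr ratio_eq
  simp only [mul_assoc]
  exact encard_setOf_mul_add_mul_eq_zero_le_one (fun s hs ↦ (mem_Ioi.1 hs).ne') ratio_injOn hk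
end
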